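/- arXiv:2002.09336 — 5 statements merged into one kernel-verified Lean document; each statement's English description precedes it below -/
import Mathlib

section
/- Let U and V be real Hilbert spaces and F : U → V a bounded linear operator. For every ν with 0 ≤ ν ≤ 1/2 and every u ∈ U one has the interpolation inequality ‖(F*F)^ν u‖ ≤ ‖Fu‖^(2ν) · ‖u‖^(1−2ν), where (F*F)^ν denotes the fractional power (via the continuous functional calculus) of the positive self-adjoint operator F*F. -/
/-! With `θ = 2ν ∈ [0, 1]`, concavity of `x ↦ x ^ θ` gives, for every `t > 0`, the tangent-line
bound `x ^ θ ≤ θ t ^ (θ - 1) x + (1 - θ) t ^ θ` on `[0, ∞) ⊇ σ(F*F)`. A star homomorphism from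
`C(σ, ℝ)` to operators is monotone for the quadratic forms `⟪· u, u⟫`, because nonnegative
functions are squares `star h * h` and go to operators `A* A`. Hence
`‖(F*F)^ν u‖² = ⟪(F*F)^θ u, u⟫ ≤ θ t^(θ-1) ‖F u‖² + (1 - θ) t^θ ‖u‖²`, and the infimum over `t`
of the right-hand side is `(‖F u‖²)^θ (‖u‖²)^(1-θ)`. -/

open ContinuousLinearMap
open scoped RealInnerProductSpace

noncomputable section

/-- `P` is the fractional power `T ^ ν` of the (positive self-adjoint) operator `T`, defined
via the continuous functional calculus: there is a continuous star-algebra homomorphism from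
`C(σ(T), ℝ)` to the bounded operators mapping the identity function to `T` (such a
homomorphism is unique by Stone–Weierstrass), and `P` is the image of (a continuous extension
of) the function `x ↦ x ^ ν`. -/
def IsFractionalPower {W : Type*} [NormedAddCommGroup W] [InnerProductSpace ℝ W]
    [CompleteSpace W] (T : W →L[ℝ] W) (ν : ℝ) (P : W →L[ℝ] W) : Prop :=
  ∃ Φ : C(spectrum ℝ T, ℝ) →⋆ₐ[ℝ] (W →L[ℝ] W),
    Continuous Φ ∧
    Φ ((ContinuousMap.id ℝ).restrict (spectrum ℝ T)) = T ∧
    ∃ f : C(ℝ, ℝ), (∀ x ∈ spectrum ℝ T, f x = x ^ ν) ∧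
      Φ (f.restrict (spectrum ℝ T)) = P

/-- `ξ` is a subgradient of the extended-real-valued functional `R` at `u`:
`R u < +∞` and `R w ≥ R u + ⟪ξ, w - u⟫` for all `w`. -/
def IsSubgradient {U : Type*} [NormedAddCommGroup U] [InnerProductSpace ℝ U]
    (R : U → EReal) (ξ u : U) : Prop :=
  R u < ⊤ ∧ ∀ w, R u + ((⟪ξ, w - u⟫ : ℝ) : EReal) ≤ R w

/-- Convexity for extended-real-valued functionals. -/
def ErealConvexOn {U : Type*} [NormedAddCommGroup U] [InnerProductSpace ℝ U]
    (R : U → EReal) : Prop :=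
  ∀ u w : U, ∀ t : ℝ, 0 ≤ t → t ≤ 1 →
    R (t • u + (1 - t) • w) ≤ ((t : ℝ) : EReal) * R u + (((1 - t : ℝ)) : EReal) * R w

/-- The Bregman distance `D_ξ(w, u) = R w - R u - ⟪ξ, w - u⟫`. -/
def Breg {U : Type*} [NormedAddCommGroup U] [InnerProductSpace ℝ U]
    (R : U → EReal) (ξ w u : U) : EReal :=
  R w - R u - ((⟪ξ, w - u⟫ : ℝ) : EReal)

/-- The Tikhonov functional `T_α(u) = (1/2)‖F u - v‖² + α R(u)`. -/
def Tik {U V : Type*} [NormedAddCommGroup U] [InnerProductSpace ℝ U]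
    [NormedAddCommGroup V] [InnerProductSpace ℝ V]
    (F : U →L[ℝ] V) (R : U → EReal) (α : ℝ) (v : V) (u : U) : EReal :=
  (((1 : ℝ) / 2 * ‖F u - v‖ ^ 2 : ℝ) : EReal) + ((α : ℝ) : EReal) * R u

namespace Real

theorem rpow_le_tangent {x t θ : ℝ} (hx : 0 ≤ x) (ht : 0 < t) (hθ0 : 0 ≤ θ) (hθ1 : θ ≤ 1) :
    x ^ θ ≤ θ * t ^ (θ - 1) * x + (1 - θ) * t ^ θ := by
  have amgm : x ^ θ * t ^ (1 - θ) ≤ θ * x + (1 - θ) * t :=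
    geom_mean_le_arith_mean2_weighted hθ0 (sub_nonneg.2 hθ1) hx ht.le (add_sub_cancel θ 1)
  have hcancel : t ^ (1 - θ) * t ^ (θ - 1) = 1 := by rw [← rpow_add ht]; simp
  have hshift : t * t ^ (θ - 1) = t ^ θ := by rw [rpow_sub_one ht.ne']; field_simp
  calc x ^ θ = x ^ θ * t ^ (1 - θ) * t ^ (θ - 1) := by rw [mul_assoc, hcancel, mul_one]
    _ ≤ (θ * x + (1 - θ) * t) * t ^ (θ - 1) := by gcongr
    _ = θ * t ^ (θ - 1) * x + (1 - θ) * t ^ θ := by rw [← hshift]; ring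

theorem le_rpow_mul_rpow_of_forall_le_tangent {y a b θ : ℝ} (ha : 0 ≤ a) (hb : 0 < b)
    (hθ0 : 0 ≤ θ) (h : ∀ t, 0 < t → y ≤ θ * t ^ (θ - 1) * a + (1 - θ) * t ^ θ * b) :
    y ≤ a ^ θ * b ^ (1 - θ) := by
  -- `a = 0` is allowed, so optimize at `t = a' / b` for every `a' > a` and let `a' → a`.
  have h_of_lt : ∀ a', a < a' → y ≤ a' ^ θ * b ^ (1 - θ) := by
    intro a' haa'
    have ha' : 0 < a' := ha.trans_lt haa'
    have hr : (a' / b) ^ (θ - 1) * a' = (a' / b) ^ θ * b := by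
      rw [rpow_sub_one (div_pos ha' hb).ne']; field_simp
    calc y ≤ θ * (a' / b) ^ (θ - 1) * a + (1 - θ) * (a' / b) ^ θ * b := h _ (div_pos ha' hb)
      _ ≤ θ * (a' / b) ^ (θ - 1) * a' + (1 - θ) * (a' / b) ^ θ * b := by gcongr
      _ = a' ^ θ * b ^ (1 - θ) := by
        rw [mul_assoc θ, hr, div_rpow ha'.le hb.le, rpow_sub hb, rpow_one]; field_simp; ring
  have hcont : ContinuousAt (fun a' => a' ^ θ * b ^ (1 - θ)) a :=
    (continuousAt_rpow_const a θ (Or.inr hθ0)).mul continuousAt_const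
  refine ge_of_tendsto (hcont.tendsto.mono_left (nhdsWithin_le_nhds (s := Set.Ioi a))) ?_
  filter_upwards [self_mem_nhdsWithin] with a' haa' using h_of_lt a' haa'

end Real

namespace StarAlgHom

variable {X W : Type*} [TopologicalSpace X] [NormedAddCommGroup W] [InnerProductSpace ℝ W]
  [CompleteSpace W] (Φ : C(X, ℝ) →⋆ₐ[ℝ] (W →L[ℝ] W))

theorem map_star_mul_self_eq_adjoint_comp (g : C(X, ℝ)) :
    Φ (star g * g) = adjoint (Φ g) ∘L Φ g := by
  rw [map_mul, map_star, star_eq_adjoint]; rfl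

theorem isPositive_map_of_nonneg {g : C(X, ℝ)} (hg : 0 ≤ g) : (Φ g).IsPositive := by
  let s : C(X, ℝ) := ⟨fun x => √(g x), by fun_prop⟩
  have hs : star s * s = g := ContinuousMap.ext fun x => Real.mul_self_sqrt (hg x)
  rw [← hs, Φ.map_star_mul_self_eq_adjoint_comp]
  exact isPositive_adjoint_comp_self _

theorem inner_map_apply_mono {g h : C(X, ℝ)} (hgh : g ≤ h) (u : W) :
    ⟪Φ g u, u⟫ ≤ ⟪Φ h u, u⟫ := by
  have := (Φ.isPositive_map_of_nonneg (sub_nonneg.2 hgh)).inner_nonneg_left u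
  rwa [map_sub, sub_apply, inner_sub_left, sub_nonneg] at this

theorem norm_map_apply_sq (g : C(X, ℝ)) (u : W) : ‖Φ g u‖ ^ 2 = ⟪Φ (g * g) u, u⟫ := by
  rw [apply_norm_sq_eq_inner_adjoint_left, ← Φ.map_star_mul_self_eq_adjoint_comp, star_trivial]
  rfl

end StarAlgHom

theorem StarAlgHom.inner_map_rpow_le {W : Type*} [NormedAddCommGroup W] [InnerProductSpace ℝ W]
    [CompleteSpace W] {s : Set ℝ} (hs : ∀ x ∈ s, 0 ≤ x) (Φ : C(s, ℝ) →⋆ₐ[ℝ] (W →L[ℝ] W))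
    {θ : ℝ} (hθ0 : 0 ≤ θ) (hθ1 : θ ≤ 1) {g : C(s, ℝ)} (hg : ∀ x : s, g x = (x : ℝ) ^ θ)
    (u : W) :
    ⟪Φ g u, u⟫ ≤ ⟪Φ ((ContinuousMap.id ℝ).restrict s) u, u⟫ ^ θ * (‖u‖ ^ 2) ^ (1 - θ) := by
  set ι := (ContinuousMap.id ℝ).restrict s
  rcases eq_or_ne u 0 with rfl | hu
  · simp only [map_zero, inner_zero_right]; positivity
  have hι : 0 ≤ ⟪Φ ι u, u⟫ :=
    (Φ.isPositive_map_of_nonneg (g := ι) fun x => hs x x.2).inner_nonneg_left u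
  refine Real.le_rpow_mul_rpow_of_forall_le_tangent hι (by positivity) hθ0 fun t ht => ?_
  calc ⟪Φ g u, u⟫ ≤ ⟪Φ ((θ * t ^ (θ - 1)) • ι + ((1 - θ) * t ^ θ) • 1) u, u⟫ :=
        Φ.inner_map_apply_mono (fun x => by
          simpa [hg, ι] using Real.rpow_le_tangent (hs x x.2) ht hθ0 hθ1) u
    _ = θ * t ^ (θ - 1) * ⟪Φ ι u, u⟫ + (1 - θ) * t ^ θ * ‖u‖ ^ 2 := by
        simp only [map_add, map_smul, map_one, add_apply, smul_apply, one_apply_eq_self,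
          inner_add_left, real_inner_smul_left, real_inner_self_eq_norm_sq]

theorem IsFractionalPower.norm_apply_sq_le {W : Type*} [NormedAddCommGroup W]
    [InnerProductSpace ℝ W] [CompleteSpace W] {T P : W →L[ℝ] W} (hT : 0 ≤ T) {ν : ℝ}
    (hν0 : 0 ≤ ν) (hν1 : ν ≤ 1 / 2) (hP : IsFractionalPower T ν P) (u : W) :
    ‖P u‖ ^ 2 ≤ ⟪T u, u⟫ ^ (2 * ν) * (‖u‖ ^ 2) ^ (1 - 2 * ν) := by
  obtain ⟨Φ, -, hΦT, f, hf, rfl⟩ := hP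
  have hσ : ∀ x ∈ spectrum ℝ T, 0 ≤ x := spectrum_nonneg_of_nonneg hT
  have hf_sq : ∀ x : spectrum ℝ T,
      (f.restrict (spectrum ℝ T) * f.restrict (spectrum ℝ T)) x = (x : ℝ) ^ (2 * ν) := by
    intro x
    rw [ContinuousMap.mul_apply, ContinuousMap.restrict_apply, hf x x.2, ← sq,
      ← Real.rpow_natCast, ← Real.rpow_mul (hσ x x.2), mul_comm]
    norm_num
  have h := Φ.inner_map_rpow_le hσ (by linarith) (by linarith) hf_sq u
  rwa [hΦT, ← Φ.norm_map_apply_sq] at h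

/-- interpolation inequality `‖(F*F)^ν u‖ ≤ ‖F u‖^(2ν) ‖u‖^(1-2ν)`. -/
theorem interpolation_inequality
    {U V : Type*} [NormedAddCommGroup U] [InnerProductSpace ℝ U] [CompleteSpace U]
    [NormedAddCommGroup V] [InnerProductSpace ℝ V] [CompleteSpace V]
    (F : U →L[ℝ] V) (ν : ℝ) (hν0 : 0 ≤ ν) (hν1 : ν ≤ 1 / 2)
    (P : U →L[ℝ] U) (hP : IsFractionalPower ((adjoint F).comp F) ν P) (u : U) :
    ‖P u‖ ≤ ‖F u‖ ^ (2 * ν) * ‖u‖ ^ (1 - 2 * ν) := by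
  have hFu : ⟪(adjoint F ∘L F) u, u⟫ = ‖F u‖ ^ 2 := by
    rw [comp_apply, adjoint_inner_left, real_inner_self_eq_norm_sq]
  have hsq := hP.norm_apply_sq_le
    ((nonneg_iff_isPositive _).2 (isPositive_adjoint_comp_self F)) hν0 hν1 u
  rw [hFu, ← Real.rpow_pow_comm (norm_nonneg _), ← Real.rpow_pow_comm (norm_nonneg _),
    ← mul_pow] at hsq
  exact le_of_pow_le_pow_left₀ two_ne_zero (by positivity) hsq
end
end

section
/- Let U and V be real Hilbert spaces and F : U → V a bounded linear operator. Let 0 ≤ ν ≤ 1/2 and suppose ξ ∈ U satisfies ξ = (F*F)^ν ω for some ω ∈ U. Then for all u ∈ U, ⟨ξ, u⟩ ≤ ‖ω‖ · ‖Fu‖^(2ν) · ‖u‖^(1−2ν). -/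
open ContinuousLinearMap
open scoped RealInnerProductSpace

noncomputable section

/-! Concavity of `x ↦ x ^ (2ν)` on `[0, ∞)` puts it below each of its tangent lines,
`x ^ (2ν) ≤ c₁(s) x + c₂(s)` for `s > 0`. A star-algebra homomorphism out of `C(X, ℝ)` is
monotone (a nonnegative `g` is `√g * √g`), so `P * P ≤ c₁(s) F*F + c₂(s)`, that is
`‖P u‖² ≤ c₁(s) ‖F u‖² + c₂(s) ‖u‖²`. Minimising over `s` gives
`‖P u‖ ≤ ‖F u‖ ^ (2ν) ‖u‖ ^ (1 - 2ν)`, and `⟪ξ, u⟫ = ⟪ω, P u⟫ ≤ ‖ω‖ ‖P u‖`. -/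

open Filter Topology

theorem Real.rpow_le_tangent_line {p x s : ℝ} (hp0 : 0 ≤ p) (hp1 : p ≤ 1) (hx : 0 ≤ x)
    (hs : 0 < s) : x ^ p ≤ p * s ^ (p - 1) * x + (1 - p) * s ^ p := by
  -- weighted AM-GM applied to `x / s` and `1`, then scaled by `s ^ p`
  have amgm : (x / s) ^ p * 1 ^ (1 - p) ≤ p * (x / s) + (1 - p) * 1 :=
    geom_mean_le_arith_mean2_weighted hp0 (by linarith) (by positivity) zero_le_one (by ring)
  have hsp : 0 < s ^ p := rpow_pos_of_pos hs p
  rw [one_rpow, mul_one, mul_one, div_rpow hx hs.le, div_le_iff₀ hsp] at amgm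
  calc x ^ p ≤ (p * (x / s) + (1 - p)) * s ^ p := amgm
    _ = p * s ^ (p - 1) * x + (1 - p) * s ^ p := by
      rw [rpow_sub_one hs.ne']
      field_simp

theorem Real.le_rpow_mul_rpow_of_forall_le_tangent_s1 {p a b X : ℝ} (hp0 : 0 ≤ p) (ha : 0 ≤ a)
    (hb : 0 < b)
    (h : ∀ s > 0, X ≤ p * s ^ (p - 1) * a + (1 - p) * s ^ p * b) :
    X ≤ a ^ p * b ^ (1 - p) := by
  -- `s = a / b` is optimal, but it may vanish; approach it by `s = (a + δ) / b`
  have hlim : Tendsto (fun δ : ℝ => ((a + δ) / b) ^ p * b) (𝓝[>] 0)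
      (𝓝 (a ^ p * b ^ (1 - p))) := by
    have hval : ((a + 0) / b) ^ p * b = a ^ p * b ^ (1 - p) := by
      rw [add_zero, div_rpow ha hb.le, rpow_sub hb, rpow_one]
      field_simp
    rw [← hval]
    refine (ContinuousAt.tendsto ?_).mono_left nhdsWithin_le_nhds
    exact (((continuousAt_const.add continuousAt_id).div_const b).rpow_const
      (Or.inr hp0)).mul continuousAt_const
  refine ge_of_tendsto hlim (eventually_nhdsWithin_of_forall fun δ (hδ : 0 < δ) => ?_)
  set s := (a + δ) / b with hs_def
  have hs : 0 < s := by positivity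
  have hsb : s * b = a + δ := by rw [hs_def]; field_simp
  calc X ≤ p * s ^ (p - 1) * a + (1 - p) * s ^ p * b := h s hs
    _ ≤ p * s ^ (p - 1) * (s * b) + (1 - p) * s ^ p * b := by
      gcongr ?_ + _
      exact mul_le_mul_of_nonneg_left (by linarith) (mul_nonneg hp0 (rpow_nonneg hs.le _))
    _ = s ^ p * b := by
      rw [rpow_sub_one hs.ne']
      field_simp
      ring

theorem Real.mul_rpow_sq {s t p q : ℝ} (hs : 0 ≤ s) (ht : 0 ≤ t) :
    (s ^ p * t ^ q) ^ 2 = (s ^ 2) ^ p * (t ^ 2) ^ q := by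
  rw [mul_pow, ← rpow_mul_natCast hs, ← rpow_mul_natCast ht, ← rpow_natCast_mul hs,
    ← rpow_natCast_mul ht, mul_comm p, mul_comm q]

section StarAlgHom

variable {X E : Type*} [TopologicalSpace X] [NormedAddCommGroup E] [InnerProductSpace ℝ E]
  [CompleteSpace E]

theorem StarAlgHom.isPositive_apply_of_nonneg (Φ : C(X, ℝ) →⋆ₐ[ℝ] (E →L[ℝ] E)) {g : C(X, ℝ)}
    (hg : 0 ≤ g) : (Φ g).IsPositive := by
  set r : C(X, ℝ) := (ContinuousMap.mk Real.sqrt Real.continuous_sqrt).comp g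
  have hgr : g = star r * r := by
    ext x
    simpa [r] using (Real.mul_self_sqrt (hg x)).symm
  rw [hgr, map_mul, map_star]
  exact isPositive_adjoint_comp_self (Φ r)

theorem StarAlgHom.monotone_of_continuousMap (Φ : C(X, ℝ) →⋆ₐ[ℝ] (E →L[ℝ] E)) : Monotone Φ :=
  fun g₁ g₂ hle => by
    rw [ContinuousLinearMap.le_def, ← map_sub]
    exact Φ.isPositive_apply_of_nonneg (sub_nonneg.mpr hle)

end StarAlgHom

theorem ContinuousLinearMap.inner_apply_self_le_of_le {E : Type*} [NormedAddCommGroup E]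
    [InnerProductSpace ℝ E] {A B : E →L[ℝ] E} (h : A ≤ B) (u : E) : ⟪A u, u⟫ ≤ ⟪B u, u⟫ := by
  have := ((le_def A B).mp h).inner_nonneg_left u
  rwa [sub_apply, inner_sub_left, sub_nonneg] at this

namespace IsFractionalPower

variable {E : Type*} [NormedAddCommGroup E] [InnerProductSpace ℝ E] [CompleteSpace E]
  {T P : E →L[ℝ] E} {ν : ℝ}

theorem isSelfAdjoint (hP : IsFractionalPower T ν P) : IsSelfAdjoint P := by
  obtain ⟨Φ, -, -, f, -, rfl⟩ := hP
  exact (IsSelfAdjoint.all _).map Φ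

theorem mul_self_le_tangent (hT : T.IsPositive) (hν0 : 0 ≤ ν) (hν1 : ν ≤ 1 / 2)
    (hP : IsFractionalPower T ν P) {s : ℝ} (hs : 0 < s) :
    P * P ≤ (2 * ν * s ^ (2 * ν - 1)) • T + ((1 - 2 * ν) * s ^ (2 * ν)) • 1 := by
  obtain ⟨Φ, -, hΦT, f, hf, rfl⟩ := hP
  have hpointwise : f.restrict (spectrum ℝ T) * f.restrict (spectrum ℝ T) ≤
      (2 * ν * s ^ (2 * ν - 1)) • (ContinuousMap.id ℝ).restrict (spectrum ℝ T) +
        ((1 - 2 * ν) * s ^ (2 * ν)) • 1 := fun x => by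
    have hx : 0 ≤ (x : ℝ) := SpectrumRestricts.nnreal_iff.mp hT.spectrumRestricts x x.2
    have hsq : (x : ℝ) ^ ν * (x : ℝ) ^ ν = (x : ℝ) ^ (2 * ν) := by
      rw [← sq, ← Real.rpow_mul_natCast hx, mul_comm]
      norm_num
    simpa [hf x x.2, hsq] using Real.rpow_le_tangent_line (by positivity) (by linarith) hx hs
  have hΦ := Φ.monotone_of_continuousMap hpointwise
  rwa [map_mul, map_add, map_smul, map_smul, map_one, hΦT] at hΦ

theorem norm_apply_sq_le_s1 (hT : T.IsPositive) (hν0 : 0 ≤ ν) (hν1 : ν ≤ 1 / 2)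
    (hP : IsFractionalPower T ν P) (u : E) :
    ‖P u‖ ^ 2 ≤ ⟪T u, u⟫ ^ (2 * ν) * (‖u‖ ^ 2) ^ (1 - 2 * ν) := by
  rcases eq_or_ne u 0 with rfl | hu
  · simpa using (by positivity : (0 : ℝ) ≤ 0 ^ (2 * ν) * 0 ^ (1 - 2 * ν))
  refine Real.le_rpow_mul_rpow_of_forall_le_tangent_s1 (by positivity) (hT.inner_nonneg_left u)
    (by positivity) fun s hs => ?_
  have hPP : ⟪(P * P) u, u⟫ = ‖P u‖ ^ 2 :=
    (hP.isSelfAdjoint.isSymmetric (P u) u).trans (real_inner_self_eq_norm_sq _)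
  rw [← hPP]
  refine (inner_apply_self_le_of_le (hP.mul_self_le_tangent hT hν0 hν1 hs) u).trans_eq ?_
  simp only [add_apply, smul_apply, one_apply_eq_self, inner_add_left, real_inner_smul_left,
    real_inner_self_eq_norm_sq]

end IsFractionalPower

/-- if `ξ = (F*F)^ν ω` then `⟪ξ, u⟫ ≤ ‖ω‖ ‖F u‖^(2ν) ‖u‖^(1-2ν)`. -/
theorem interpolation_inner
    {U V : Type*} [NormedAddCommGroup U] [InnerProductSpace ℝ U] [CompleteSpace U]
    [NormedAddCommGroup V] [InnerProductSpace ℝ V] [CompleteSpace V]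
    (F : U →L[ℝ] V) (ν : ℝ) (hν0 : 0 ≤ ν) (hν1 : ν ≤ 1 / 2)
    (P : U →L[ℝ] U) (hP : IsFractionalPower ((adjoint F).comp F) ν P)
    (ξ ω : U) (hξ : ξ = P ω) (u : U) :
    ⟪ξ, u⟫ ≤ ‖ω‖ * ‖F u‖ ^ (2 * ν) * ‖u‖ ^ (1 - 2 * ν) := by
  have hPu : ‖P u‖ ≤ ‖F u‖ ^ (2 * ν) * ‖u‖ ^ (1 - 2 * ν) := by
    have hsq := hP.norm_apply_sq_le_s1 (isPositive_adjoint_comp_self F) hν0 hν1 u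
    rw [comp_apply, adjoint_inner_left, real_inner_self_eq_norm_sq,
      ← Real.mul_rpow_sq (norm_nonneg _) (norm_nonneg _)] at hsq
    exact (pow_le_pow_iff_left₀ (norm_nonneg _) (by positivity) two_ne_zero).mp hsq
  calc ⟪ξ, u⟫ = ⟪ω, P u⟫ := hξ ▸ hP.isSelfAdjoint.isSymmetric ω u
    _ ≤ ‖ω‖ * ‖P u‖ := real_inner_le_norm ω (P u)
    _ ≤ ‖ω‖ * (‖F u‖ ^ (2 * ν) * ‖u‖ ^ (1 - 2 * ν)) := by gcongr
    _ = ‖ω‖ * ‖F u‖ ^ (2 * ν) * ‖u‖ ^ (1 - 2 * ν) := (mul_assoc _ _ _).symm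
end
end

section
/- (Range identity for fractional powers.) Let U, V be real Hilbert spaces and F : U → V a bounded linear operator. For every μ with 0 ≤ μ ≤ 1/2, the range of (F*F)^(μ+1/2) equals the range of the composition F* ∘ (FF*)^μ; i.e., ξ ∈ U can be written as ξ = (F*F)^(μ+1/2) η for some η ∈ U if and only if ξ = F*((FF*)^μ ω) for some ω ∈ V. -/
open ContinuousLinearMap
open scoped RealInnerProductSpace

noncomputable section

/-!
Squaring, the functional calculus gives `P ∘ P = (F*F)^(2μ+1) = F* (FF*)^(2μ) F = F* Q Q F`.
The middle identity holds for polynomials because `F (F*F)ⁿ = (FF*)ⁿ F`, and passes to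
continuous functions by Weierstrass approximation on `σ(F*F) ∪ σ(FF*)`; positivity of `F*F`
puts its spectrum in `[0, ∞)`, where `Real.rpow` obeys the exponent laws. Hence `‖P x‖ = ‖Q (F x)‖` for all `x`, i.e. `P = P*` and
`(F* Q)* = Q F` have equal norms pointwise, and Douglas' range inclusion lemma gives
`ran P = ran (F* Q)`: a functional `x ↦ ⟪ξ, x⟫` dominated by `‖B* x‖` factors through `B*`
(Hahn–Banach), and the Riesz representative `ω` of the factor satisfies `B ω = ξ`.
-/

theorem StrongDual.exists_comp_eq_of_norm_le {𝕜 E F : Type*} [RCLike 𝕜]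
    [NormedAddCommGroup E] [NormedSpace 𝕜 E] [NormedAddCommGroup F] [NormedSpace 𝕜 F]
    (T : E →L[𝕜] F) (m : StrongDual 𝕜 E) {c : ℝ} (hm : ∀ x, ‖m x‖ ≤ c * ‖T x‖) :
    ∃ g : StrongDual 𝕜 F, g ∘L T = m := by
  have hker : LinearMap.ker (T : E →ₗ[𝕜] F) ≤ LinearMap.ker (m : E →ₗ[𝕜] 𝕜) := fun x hx ↦ by
    simpa [show T x = 0 from hx] using hm x
  let m₀ : LinearMap.range (T : E →ₗ[𝕜] F) →ₗ[𝕜] 𝕜 :=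
    ((LinearMap.ker (T : E →ₗ[𝕜] F)).liftQ m hker).comp
      (T : E →ₗ[𝕜] F).quotKerEquivRange.symm.toLinearMap
  have hm₀ : ∀ x, m₀ ⟨T x, LinearMap.mem_range_self _ x⟩ = m x := fun x ↦ by
    simp only [m₀, LinearMap.coe_comp, LinearEquiv.coe_coe, Function.comp_apply]
    exact congrArg _ (LinearMap.quotKerEquivRange_symm_apply_image _ x _)
  have hm₀_le : ∀ y, ‖m₀ y‖ ≤ c * ‖y‖ := by
    rintro ⟨_, x, rfl⟩
    exact (hm₀ x).symm ▸ hm x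
  obtain ⟨g, hg, -⟩ := exists_extension_norm_eq _ (m₀.mkContinuous c hm₀_le)
  exact ⟨g, ContinuousLinearMap.ext fun x ↦ (hg ⟨T x, _⟩).trans (hm₀ x)⟩

theorem AlgHom.map_toContinuousMapOn_eq_aeval {A : Type*} [Ring A] [Algebra ℝ A] {s : Set ℝ}
    (Φ : C(s, ℝ) →ₐ[ℝ] A) {a : A} (ha : Φ ((ContinuousMap.id ℝ).restrict s) = a)
    (p : Polynomial ℝ) : Φ (p.toContinuousMapOn s) = Polynomial.aeval a p := calc
  Φ (p.toContinuousMapOn s)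
    = Φ (Polynomial.toContinuousMapOnAlgHom s (Polynomial.aeval Polynomial.X p)) := by
      rw [Polynomial.aeval_X_left_apply, Polynomial.toContinuousMapOnAlgHom_apply]
  _ = Polynomial.aeval (Φ (Polynomial.toContinuousMapOnAlgHom s Polynomial.X)) p := by
      rw [Polynomial.aeval_algHom_apply, Polynomial.aeval_algHom_apply]
  _ = Polynomial.aeval a p := by
      rw [Polynomial.toContinuousMapOnAlgHom_apply, Polynomial.toContinuousMapOn_X_eq_restrict_id,
        ha]

theorem ContinuousLinearMap.comp_aeval_eq_aeval_comp {𝕜 E F : Type*} [NormedField 𝕜]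
    [NormedAddCommGroup E] [NormedSpace 𝕜 E] [NormedAddCommGroup F] [NormedSpace 𝕜 F]
    {A : E →L[𝕜] F} {S : E →L[𝕜] E} {T : F →L[𝕜] F} (h : A ∘L S = T ∘L A) (p : Polynomial 𝕜) :
    A ∘L Polynomial.aeval S p = Polynomial.aeval T p ∘L A := by
  induction p using Polynomial.induction_on with
  | C a => ext x; simp [Algebra.algebraMap_eq_smul_one]
  | add p q hp hq => simp only [map_add, comp_add, add_comp, hp, hq]
  | monomial n a ih =>
    rw [pow_succ, ← mul_assoc]
    simp only [map_mul (Polynomial.aeval _) _ Polynomial.X, Polynomial.aeval_X, mul_def]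
    rw [← comp_assoc, ih, comp_assoc, h, comp_assoc]

theorem ContinuousLinearMap.comp_map_restrict_eq_map_restrict_comp {E F : Type*}
    [NormedAddCommGroup E] [NormedSpace ℝ E] [NormedAddCommGroup F] [NormedSpace ℝ F]
    {A : E →L[ℝ] F} {S : E →L[ℝ] E} {T : F →L[ℝ] F} (h : A ∘L S = T ∘L A)
    {s t : Set ℝ} [CompactSpace s] [CompactSpace t]
    {Φ : C(s, ℝ) →ₐ[ℝ] (E →L[ℝ] E)} (hΦ : Continuous Φ)
    (hΦS : Φ ((ContinuousMap.id ℝ).restrict s) = S)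
    {Ψ : C(t, ℝ) →ₐ[ℝ] (F →L[ℝ] F)} (hΨ : Continuous Ψ)
    (hΨT : Ψ ((ContinuousMap.id ℝ).restrict t) = T) (q : C(ℝ, ℝ)) :
    A ∘L Φ (q.restrict s) = Ψ (q.restrict t) ∘L A := by
  have : CompactSpace ↥(s ∪ t) := isCompact_iff_compactSpace.mp <|
    (isCompact_iff_compactSpace.mpr ‹_›).union (isCompact_iff_compactSpace.mpr ‹_›)
  let ιs : C(s, ↥(s ∪ t)) := ⟨Set.inclusion Set.subset_union_left, continuous_inclusion _⟩
  let ιt : C(t, ↥(s ∪ t)) := ⟨Set.inclusion Set.subset_union_right, continuous_inclusion _⟩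
  have hdense : Dense (polynomialFunctions (s ∪ t) : Set C(↥(s ∪ t), ℝ)) := by
    rw [dense_iff_closure_eq, ← Subalgebra.topologicalClosure_coe,
      polynomialFunctions.topologicalClosure]
    rfl
  have key : (fun f : C(↥(s ∪ t), ℝ) ↦ A ∘L Φ (f.comp ιs)) = fun f ↦ Ψ (f.comp ιt) ∘L A := by
    refine Continuous.ext_on hdense
      (continuous_const.clm_comp (hΦ.comp (ContinuousMap.continuous_precomp ιs)))
      ((hΨ.comp (ContinuousMap.continuous_precomp ιt)).clm_comp continuous_const) ?_
    rintro _ ⟨p, -, rfl⟩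
    exact (congrArg (A ∘L ·) (Φ.map_toContinuousMapOn_eq_aeval hΦS p)).trans <|
      (comp_aeval_eq_aeval_comp h p).trans
        (congrArg (· ∘L A) (Ψ.map_toContinuousMapOn_eq_aeval hΨT p).symm)
  exact congrFun key (q.restrict (s ∪ t))

section HilbertSpaces

variable {U V : Type*} [NormedAddCommGroup U] [InnerProductSpace ℝ U] [CompleteSpace U]
  [NormedAddCommGroup V] [InnerProductSpace ℝ V] [CompleteSpace V]

theorem range_le_range_of_norm_adjoint_apply_le {W : Type*} [NormedAddCommGroup W]
    [InnerProductSpace ℝ W] [CompleteSpace W] (A : W →L[ℝ] U) (B : V →L[ℝ] U)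
    (h : ∀ x, ‖adjoint A x‖ ≤ ‖adjoint B x‖) : Set.range A ⊆ Set.range B := by
  rintro _ ⟨η, rfl⟩
  have hdom : ∀ x, ‖innerSL ℝ (A η) x‖ ≤ ‖η‖ * ‖adjoint B x‖ := fun x ↦ calc
    ‖innerSL ℝ (A η) x‖ = ‖⟪η, adjoint A x⟫‖ := by rw [innerSL_apply_apply, adjoint_inner_right]
    _ ≤ ‖η‖ * ‖adjoint A x‖ := norm_inner_le_norm _ _
    _ ≤ ‖η‖ * ‖adjoint B x‖ := by gcongr; exact h x
  obtain ⟨g, hg⟩ := StrongDual.exists_comp_eq_of_norm_le _ _ hdom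
  refine ⟨(InnerProductSpace.toDual ℝ V).symm g, ext_inner_right ℝ fun x ↦ ?_⟩
  rw [← adjoint_inner_right, InnerProductSpace.toDual_symm_apply, ← comp_apply, hg,
    innerSL_apply_apply]

theorem IsFractionalPower.isSelfAdjoint_s10 {W : Type*} [NormedAddCommGroup W]
    [InnerProductSpace ℝ W] [CompleteSpace W] {T P : W →L[ℝ] W} {ν : ℝ}
    (hP : IsFractionalPower T ν P) : IsSelfAdjoint P := by
  obtain ⟨Φ, -, -, f, -, rfl⟩ := hP
  exact (IsSelfAdjoint.all _).map Φ

theorem Real.rpow_add_half_mul_self {x μ : ℝ} (hx : 0 ≤ x) (hμ : 0 ≤ μ) :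
    x ^ (μ + 1 / 2) * x ^ (μ + 1 / 2) = x * (x ^ μ * x ^ μ) := by
  rw [← Real.rpow_add_of_nonneg hx (by positivity) (by positivity),
    ← Real.rpow_add_of_nonneg hx hμ hμ, ← Real.rpow_one_add' hx (by positivity)]
  ring_nf

theorem IsFractionalPower.comp_self_eq_adjoint_comp_comp_self_comp (F : U →L[ℝ] V) {μ : ℝ}
    (hμ : 0 ≤ μ) {P : U →L[ℝ] U} (hP : IsFractionalPower (adjoint F ∘L F) (μ + 1 / 2) P)
    {Q : V →L[ℝ] V} (hQ : IsFractionalPower (F ∘L adjoint F) μ Q) :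
    P ∘L P = adjoint F ∘L (Q ∘L Q) ∘L F := by
  obtain ⟨Φ, hΦ, hΦid, f, hf, rfl⟩ := hP
  obtain ⟨Ψ, hΨ, hΨid, g, hg, rfl⟩ := hQ
  let q : C(ℝ, ℝ) := ⟨fun x ↦ x ^ μ * x ^ μ,
    (Real.continuous_rpow_const hμ).mul (Real.continuous_rpow_const hμ)⟩
  have hfq : (f * f).restrict (spectrum ℝ (adjoint F ∘L F))
      = (ContinuousMap.id ℝ * q).restrict (spectrum ℝ (adjoint F ∘L F)) := by
    ext ⟨x, hx⟩
    have hx0 : 0 ≤ x := spectrum_nonneg_of_nonneg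
      ((nonneg_iff_isPositive _).mpr (isPositive_adjoint_comp_self F)) hx
    simpa [q, hf x hx] using Real.rpow_add_half_mul_self hx0 hμ
  have hgq : (g * g).restrict (spectrum ℝ (F ∘L adjoint F))
      = q.restrict (spectrum ℝ (F ∘L adjoint F)) := by
    ext ⟨x, hx⟩
    simp [q, hg x hx]
  have hint := comp_map_restrict_eq_map_restrict_comp (A := F) (comp_assoc _ _ _).symm
    (Φ := Φ.toAlgHom) hΦ hΦid (Ψ := Ψ.toAlgHom) hΨ hΨid q
  calc Φ (f.restrict _) * Φ (f.restrict _)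
      = Φ ((ContinuousMap.id ℝ).restrict _) * Φ (q.restrict _) := by
        rw [← map_mul, ← map_mul]; exact congrArg Φ hfq
    _ = adjoint F ∘L (F ∘L Φ (q.restrict _)) := by rw [hΦid]; rfl
    _ = adjoint F ∘L (Ψ (q.restrict _) ∘L F) := congrArg (adjoint F ∘L ·) hint
    _ = adjoint F ∘L (Ψ (g.restrict _) * Ψ (g.restrict _)) ∘L F := by
        rw [← map_mul, ← hgq]; rfl

end HilbertSpaces

theorem range_identity_fractional_powers_general
    {U V : Type*} [NormedAddCommGroup U] [InnerProductSpace ℝ U] [CompleteSpace U]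
    [NormedAddCommGroup V] [InnerProductSpace ℝ V] [CompleteSpace V]
    (F : U →L[ℝ] V) (μ : ℝ) (hμ0 : 0 ≤ μ)
    (P : U →L[ℝ] U) (hP : IsFractionalPower ((adjoint F).comp F) (μ + 1 / 2) P)
    (Q : V →L[ℝ] V) (hQ : IsFractionalPower (F.comp (adjoint F)) μ Q)
    (ξ : U) :
    (∃ η : U, ξ = P η) ↔ (∃ ω : V, ξ = adjoint F (Q ω)) := by
  have hsquare : adjoint P ∘L P = adjoint (Q ∘L F) ∘L (Q ∘L F) := by
    rw [hP.isSelfAdjoint_s10.adjoint_eq, adjoint_comp, hQ.isSelfAdjoint_s10.adjoint_eq,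
      IsFractionalPower.comp_self_eq_adjoint_comp_comp_self_comp F hμ0 hP hQ]
    simp only [comp_assoc]
  have hnorm : ∀ x, ‖adjoint P x‖ = ‖adjoint (adjoint F ∘L Q) x‖ := fun x ↦ by
    rw [hP.isSelfAdjoint_s10.adjoint_eq, adjoint_comp, adjoint_adjoint, hQ.isSelfAdjoint_s10.adjoint_eq,
      apply_norm_eq_sqrt_inner_adjoint_left, apply_norm_eq_sqrt_inner_adjoint_left, hsquare]
  have hrange : Set.range P = Set.range (adjoint F ∘L Q) :=
    (range_le_range_of_norm_adjoint_apply_le _ _ fun x ↦ (hnorm x).le).antisymm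
      (range_le_range_of_norm_adjoint_apply_le _ _ fun x ↦ (hnorm x).ge)
  simpa only [Set.mem_range, eq_comm, comp_apply] using Set.ext_iff.mp hrange ξ

/-- range identity `ran (F*F)^(μ+1/2) = ran (F* ∘ (FF*)^μ)`. -/
theorem range_identity_fractional_powers
    {U V : Type*} [NormedAddCommGroup U] [InnerProductSpace ℝ U] [CompleteSpace U]
    [NormedAddCommGroup V] [InnerProductSpace ℝ V] [CompleteSpace V]
    (F : U →L[ℝ] V) (μ : ℝ) (hμ0 : 0 ≤ μ) (hμ1 : μ ≤ 1 / 2)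
    (P : U →L[ℝ] U) (hP : IsFractionalPower ((adjoint F).comp F) (μ + 1 / 2) P)
    (Q : V →L[ℝ] V) (hQ : IsFractionalPower (F.comp (adjoint F)) μ Q)
    (ξ : U) :
    (∃ η : U, ξ = P η) ↔ (∃ ω : V, ξ = adjoint F (Q ω)) :=
  range_identity_fractional_powers_general F μ hμ0 P hP Q hQ ξ
end
end

section
/- (Key dual estimate for higher-order rates.) Let U, V be real Hilbert spaces, F : U → V bounded linear, R : U → ℝ ∪ {+∞} proper and convex, α > 0, δ > 0. Suppose ξ† = F*ω† is a subgradient of R at u† for some ω† ∈ V, with Fu† = v† and ‖v† − v^δ‖ ≤ δ. Let u_α^δ be a minimiser of T_α(u) = (1/2)‖Fu − v^δ‖² + αR(u) with R(u_α^δ) < +∞, set ω_α^δ := −(1/α)(F u_α^δ − v^δ) and ξ_α^δ := F* ω_α^δ. Then ⟨ξ_α^δ − ξ†, u_α^δ − u†⟩ ≤ −α‖ω_α^δ − ω†‖² − α⟨ω_α^δ − ω†, ω†⟩ + δ‖ω_α^δ − ω†‖. -/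
open ContinuousLinearMap
open scoped RealInnerProductSpace

noncomputable section

/-! Moving `F` across the pairing, the definition of `ω_α^δ` says `F u_α^δ - v^δ = -α ω_α^δ`, so
`F (u_α^δ - u†) = -α (ω_α^δ - ω†) - α ω† + (v^δ - v†)`; the estimate is this identity paired with
`ω_α^δ - ω†`, with Cauchy–Schwarz on the data-error term. -/

section

variable {U V : Type*} [NormedAddCommGroup U] [InnerProductSpace ℝ U] [CompleteSpace U]
  [NormedAddCommGroup V] [InnerProductSpace ℝ V] [CompleteSpace V]

theorem eq_neg_smul_of_eq_neg_inv_smul {E : Type*} [AddCommGroup E] [Module ℝ E] {α : ℝ}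
    (hα : α ≠ 0) {r ω : E} (hω : ω = -(1 / α) • r) : r = -α • ω := by
  rw [hω, smul_smul, neg_mul_neg, mul_one_div_cancel hα, one_smul]

theorem inner_adjoint_sub_eq_of_residual_eq (F : U →L[ℝ] V) {α : ℝ} {u u₀ : U} {v ω ω₀ : V}
    (hres : F u - v = -α • ω) :
    ⟪adjoint F ω - adjoint F ω₀, u - u₀⟫
      = -α * ‖ω - ω₀‖ ^ 2 - α * ⟪ω - ω₀, ω₀⟫ + ⟪ω - ω₀, v - F u₀⟫ := by
  have hFu : F u - F u₀ = -α • (ω - ω₀) + (-α • ω₀ + (v - F u₀)) := by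
    rw [← sub_add_sub_cancel (F u) v, hres]
    module
  rw [← map_sub, adjoint_inner_left, map_sub, hFu, inner_add_right, inner_add_right,
    real_inner_smul_right, real_inner_smul_right, real_inner_self_eq_norm_sq]
  ring

end

theorem real_inner_le_mul_norm_of_norm_le {E : Type*} [NormedAddCommGroup E]
    [InnerProductSpace ℝ E] {x y : E} {δ : ℝ} (hy : ‖y‖ ≤ δ) :
    ⟪x, y⟫ ≤ δ * ‖x‖ :=
  calc ⟪x, y⟫ ≤ ‖x‖ * ‖y‖ := real_inner_le_norm x y
    _ ≤ ‖x‖ * δ := by gcongr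
    _ = δ * ‖x‖ := mul_comm _ _

theorem dual_estimate_general
    {U V : Type*} [NormedAddCommGroup U] [InnerProductSpace ℝ U] [CompleteSpace U]
    [NormedAddCommGroup V] [InnerProductSpace ℝ V] [CompleteSpace V]
    (F : U →L[ℝ] V)
    (α δ : ℝ) (hα : 0 < α)
    (udag : U) (vdag vδ : V) (hud : F udag = vdag) (hnoise : ‖vdag - vδ‖ ≤ δ)
    (ωdag : V) (ξdag : U) (hξ : ξdag = adjoint F ωdag)
    (uαδ : U)
    (ωαδ : V) (hω : ωαδ = -(1 / α) • (F uαδ - vδ))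
    (ξαδ : U) (hξα : ξαδ = adjoint F ωαδ) :
    ⟪ξαδ - ξdag, uαδ - udag⟫
      ≤ -α * ‖ωαδ - ωdag‖ ^ 2 - α * ⟪ωαδ - ωdag, ωdag⟫ + δ * ‖ωαδ - ωdag‖ := by
  subst hξ hξα hud
  rw [inner_adjoint_sub_eq_of_residual_eq F (eq_neg_smul_of_eq_neg_inv_smul hα.ne' hω)]
  have hdata : ⟪ωαδ - ωdag, vδ - F udag⟫ ≤ δ * ‖ωαδ - ωdag‖ :=
    real_inner_le_mul_norm_of_norm_le (by rwa [norm_sub_rev])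
  linarith

/-- key dual estimate for higher-order rates. -/
theorem dual_estimate
    {U V : Type*} [NormedAddCommGroup U] [InnerProductSpace ℝ U] [CompleteSpace U]
    [NormedAddCommGroup V] [InnerProductSpace ℝ V] [CompleteSpace V]
    (F : U →L[ℝ] V) (R : U → EReal) (hRbot : ∀ u, R u ≠ ⊥) (hconv : ErealConvexOn R)
    (α δ : ℝ) (hα : 0 < α) (hδ : 0 < δ)
    (udag : U) (vdag vδ : V) (hud : F udag = vdag) (hnoise : ‖vdag - vδ‖ ≤ δ)
    (ωdag : V) (ξdag : U) (hξ : ξdag = adjoint F ωdag) (hsub : IsSubgradient R ξdag udag)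
    (uαδ : U) (hmin : ∀ u, Tik F R α vδ uαδ ≤ Tik F R α vδ u) (hfin : R uαδ < ⊤)
    (ωαδ : V) (hω : ωαδ = -(1 / α) • (F uαδ - vδ))
    (ξαδ : U) (hξα : ξαδ = adjoint F ωαδ) :
    ⟪ξαδ - ξdag, uαδ - udag⟫
      ≤ -α * ‖ωαδ - ωdag‖ ^ 2 - α * ⟪ωαδ - ωdag, ωdag⟫ + δ * ‖ωαδ - ωdag‖ :=
  dual_estimate_general F α δ hα udag vdag vδ hud hnoise ωdag ξdag hξ uαδ ωαδ hω ξαδ hξα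
end
end

section
/- (Classical rates for quadratic Tikhonov regularisation.) Let U, V be real Hilbert spaces and F : U → V bounded linear. Let u† = (F*F)^ν ω for some ω ∈ U and 0 < ν ≤ 1, set v† = Fu†, fix c > 0, and choose α(δ) = c·δ^(2/(2ν+1)). Then there exists C > 0 such that for every δ > 0 and every v^δ with ‖v† − v^δ‖ ≤ δ, the (unique) Tikhonov-regularised solution u_α^δ = (F*F + α(δ)·I)⁻¹ F* v^δ satisfies ‖u_α^δ − u†‖ ≤ C·δ^(2ν/(2ν+1)). -/
open ContinuousLinearMap
open scoped RealInnerProductSpace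

noncomputable section

/-!
With `A = F*F + α`, the identity `F* v† = A u† - α u†` splits the error as
`u_α^δ - u† = A⁻¹ F* (v^δ - v†) - α A⁻¹ (F*F)^ν ω`.
Testing `A u = F* w` against `u` gives `‖F u‖² + α ‖u‖² ≤ ‖w‖ ‖F u‖`, so `‖u‖ ≤ ‖w‖ / (2 √α)`:
the data error is at most `δ / (2 √α)`. The approximation error is `Φ (λ ↦ α λ^ν / (λ + α)) ω`
for the functional calculus `Φ` of `F*F`; this symbol is at most `α^ν` on `[0, ∞)` when
`0 ≤ ν ≤ 1`, and a continuous star homomorphism out of `C(σ, ℝ)` is contractive, because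
`‖a ^ 2 ^ n‖ = ‖a‖ ^ 2 ^ n` for self-adjoint `a` in a C⋆-ring. For `α = c δ^(2/(2ν+1))` both
`δ / √α` and `α^ν` are constant multiples of `δ^(2ν/(2ν+1))`.
-/

open Filter Topology

theorem le_of_forall_pow_two_pow_le_mul {a b K : ℝ} (hb : 0 ≤ b)
    (h : ∀ n : ℕ, a ^ 2 ^ n ≤ K * b ^ 2 ^ n) : a ≤ b := by
  by_contra! hba
  have ha : 0 < a := hb.trans_lt hba
  have hlim : Tendsto (fun n : ℕ => K * (b / a) ^ 2 ^ n) atTop (𝓝 0) := by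
    simpa using ((tendsto_pow_atTop_nhds_zero_of_lt_one (div_nonneg hb ha.le)
      ((div_lt_one ha).2 hba)).comp (tendsto_pow_atTop_atTop_of_one_lt one_lt_two)).const_mul K
  obtain ⟨n, hn⟩ := (hlim.eventually (gt_mem_nhds one_pos)).exists
  rw [div_pow, mul_div_assoc', div_lt_one (by positivity)] at hn
  exact (h n).not_gt hn

theorem StarAlgHom.norm_apply_le_of_continuous {X A : Type*} [TopologicalSpace X] [CompactSpace X]
    [NormedRing A] [StarRing A] [CStarRing A] [NormedAlgebra ℝ A]
    (Φ : C(X, ℝ) →⋆ₐ[ℝ] A) (hΦ : Continuous Φ) (g : C(X, ℝ)) : ‖Φ g‖ ≤ ‖g‖ := by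
  obtain ⟨K, -, hK⟩ := SemilinearMapClass.bound_of_continuous Φ hΦ
  have hg : IsSelfAdjoint g := IsSelfAdjoint.all g
  refine le_of_forall_pow_two_pow_le_mul (K := K) (norm_nonneg _) fun n => ?_
  have hΦg : ‖Φ g ^ 2 ^ n‖ = ‖Φ g‖ ^ 2 ^ n := by
    rw [← coe_nnnorm, (hg.map Φ).nnnorm_pow_two_pow, NNReal.coe_pow, coe_nnnorm]
  have hgn : ‖g ^ 2 ^ n‖ = ‖g‖ ^ 2 ^ n := by
    rw [← coe_nnnorm, hg.nnnorm_pow_two_pow, NNReal.coe_pow, coe_nnnorm]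
  rw [← hΦg, ← hgn, ← map_pow]
  exact hK _

theorem mul_rpow_le_rpow_mul_add {x α ν : ℝ} (hx : 0 ≤ x) (hα : 0 < α) (hν0 : 0 ≤ ν)
    (hν1 : ν ≤ 1) : α * x ^ ν ≤ α ^ ν * (x + α) := by
  have ht : 0 ≤ x / α := div_nonneg hx hα.le
  have hpow : (x / α) ^ ν ≤ x / α + 1 := by
    rcases le_total (x / α) 1 with h | h
    · linarith [Real.rpow_le_one ht h hν0]
    · linarith [Real.rpow_le_self_of_one_le h hν1]
  calc α * x ^ ν = α ^ ν * (α * (x / α) ^ ν) := by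
        have hαν : α ^ ν ≠ 0 := (Real.rpow_pos_of_pos hα ν).ne'
        rw [Real.div_rpow hx hα.le]
        field_simp
    _ ≤ α ^ ν * (α * (x / α + 1)) := by gcongr
    _ = α ^ ν * (x + α) := by field_simp

section Positive

variable {E : Type*} [NormedAddCommGroup E] [InnerProductSpace ℝ E] [CompleteSpace E]
  {T : E →L[ℝ] E}

theorem ContinuousLinearMap.IsPositive.isUnit_add_smul_one (hT : T.IsPositive) {α : ℝ}
    (hα : 0 < α) : IsUnit (T + α • 1) := by
  refine isUnit_of_forall_le_norm_inner_map _ (c := α.toNNReal) (by simpa using hα) fun x => ?_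
  have hinner : ⟪(T + α • (1 : E →L[ℝ] E)) x, x⟫ = ⟪T x, x⟫ + α * ‖x‖ ^ 2 := by
    simp [inner_add_left, real_inner_smul_left]
  have hTx : 0 ≤ ⟪T x, x⟫ := hT.inner_nonneg_left x
  rw [hinner, Real.coe_toNNReal _ hα.le, Real.norm_of_nonneg (by positivity)]
  linarith

theorem ContinuousLinearMap.IsPositive.nonneg_of_mem_spectrum (hT : T.IsPositive) {x : ℝ}
    (hx : x ∈ spectrum ℝ T) : 0 ≤ x := by
  by_contra! hneg
  refine spectrum.notMem_iff.2 ?_ hx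
  have : algebraMap ℝ (E →L[ℝ] E) x - T = -(T + (-x) • 1) := by
    rw [Algebra.algebraMap_eq_smul_one, neg_smul]; abel
  exact this ▸ (hT.isUnit_add_smul_one (neg_pos.2 hneg)).neg

end Positive

theorem exists_map_eq_ring_inverse_add_smul_one {A F : Type*} [Ring A] [Algebra ℝ A] {a : A}
    [FunLike F C(spectrum ℝ a, ℝ) A] [AlgHomClass F ℝ C(spectrum ℝ a, ℝ) A] (Φ : F)
    (hΦ : Φ ((ContinuousMap.id ℝ).restrict (spectrum ℝ a)) = a) {α : ℝ}
    (hα : -α ∉ spectrum ℝ a) :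
    ∃ g : C(spectrum ℝ a, ℝ), (∀ x, g x = (x + α)⁻¹) ∧ Ring.inverse (a + α • 1) = Φ g := by
  have hne : ∀ x : spectrum ℝ a, (x : ℝ) + α ≠ 0 := fun x hx =>
    hα (eq_neg_of_add_eq_zero_left hx ▸ x.2)
  let shift : C(spectrum ℝ a, ℝ) :=
    (ContinuousMap.id ℝ).restrict (spectrum ℝ a) + algebraMap ℝ _ α
  let g : C(spectrum ℝ a, ℝ) :=
    ⟨fun x => ((x : ℝ) + α)⁻¹, (continuous_subtype_val.add continuous_const).inv₀ hne⟩
  have hg : g * shift = 1 := by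
    ext x
    exact inv_mul_cancel₀ (hne x)
  have hshift : Φ shift = a + α • 1 := by
    rw [map_add, hΦ, AlgHomClass.commutes, Algebra.algebraMap_eq_smul_one]
  refine ⟨g, fun _ => rfl, ?_⟩
  rw [← hshift]
  exact Ring.inverse_unit ⟨Φ shift, Φ g, by rw [← map_mul, mul_comm, hg, map_one],
    by rw [← map_mul, hg, map_one]⟩

theorem IsFractionalPower.norm_smul_ring_inverse_mul_le {W : Type*} [NormedAddCommGroup W]
    [InnerProductSpace ℝ W] [CompleteSpace W] {T P : W →L[ℝ] W} {ν α : ℝ}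
    (hP : IsFractionalPower T ν P) (hT : ∀ x ∈ spectrum ℝ T, 0 ≤ x) (hν0 : 0 ≤ ν)
    (hν1 : ν ≤ 1) (hα : 0 < α) : ‖α • Ring.inverse (T + α • 1) * P‖ ≤ α ^ ν := by
  obtain ⟨Φ, hΦc, hΦ, f, hf, rfl⟩ := hP
  obtain ⟨g, hg, hinv⟩ := exists_map_eq_ring_inverse_add_smul_one Φ hΦ
    (fun h => (neg_neg_of_pos hα).not_ge (hT _ h))
  have hsymbol : ‖α • (g * f.restrict (spectrum ℝ T))‖ ≤ α ^ ν := by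
    refine (ContinuousMap.norm_le _ (by positivity)).2 fun x => ?_
    have hx : 0 ≤ (x : ℝ) := hT x x.2
    rw [ContinuousMap.smul_apply, ContinuousMap.mul_apply, ContinuousMap.restrict_apply, hg,
      hf x x.2, smul_eq_mul, Real.norm_of_nonneg (by positivity), ← mul_assoc, ← div_eq_mul_inv,
      div_mul_eq_mul_div, div_le_iff₀ (by positivity)]
    exact mul_rpow_le_rpow_mul_add hx hα hν0 hν1
  calc ‖α • Ring.inverse (T + α • 1) * Φ (f.restrict (spectrum ℝ T))‖
      = ‖Φ (α • (g * f.restrict (spectrum ℝ T)))‖ := by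
        rw [hinv, map_smul, map_mul, smul_mul_assoc]
    _ ≤ α ^ ν := (Φ.norm_apply_le_of_continuous hΦc _).trans hsymbol

section Tikhonov

variable {U V : Type*} [NormedAddCommGroup U] [InnerProductSpace ℝ U] [CompleteSpace U]
  [NormedAddCommGroup V] [InnerProductSpace ℝ V] [CompleteSpace V] (F : U →L[ℝ] V) {α : ℝ}

theorem norm_ring_inverse_adjoint_comp_add_smul_apply_le (hα : 0 < α) (w : V) :
    ‖Ring.inverse (adjoint F ∘L F + α • 1) (adjoint F w)‖ ≤ ‖w‖ / (2 * √α) := by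
  set u := Ring.inverse (adjoint F ∘L F + α • 1) (adjoint F w)
  have hu : adjoint F (F u) + α • u = adjoint F w := by
    have h := congr($(Ring.mul_inverse_cancel _
      ((isPositive_adjoint_comp_self F).isUnit_add_smul_one hα)) (adjoint F w))
    simpa using h
  have henergy : ‖F u‖ ^ 2 + α * ‖u‖ ^ 2 ≤ ‖w‖ * ‖F u‖ := by
    have h := congrArg (⟪·, u⟫) hu
    simp only [inner_add_left, real_inner_smul_left, adjoint_inner_left,
      real_inner_self_eq_norm_sq] at h
    linarith [real_inner_le_norm w (F u)]
  have hsq : (2 * √α * ‖u‖) ^ 2 ≤ ‖w‖ ^ 2 := by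
    rw [mul_pow, mul_pow, Real.sq_sqrt hα.le]
    nlinarith [sq_nonneg (2 * ‖F u‖ - ‖w‖)]
  rw [le_div_iff₀ (by positivity), mul_comm]
  exact (pow_le_pow_iff_left₀ (by positivity) (norm_nonneg w) two_ne_zero).1 hsq

theorem ring_inverse_adjoint_comp_add_smul_apply_sub (hα : 0 < α) (u : U) (v : V) :
    Ring.inverse (adjoint F ∘L F + α • 1) (adjoint F v) - u =
      Ring.inverse (adjoint F ∘L F + α • 1) (adjoint F (v - F u)) -
        (α • Ring.inverse (adjoint F ∘L F + α • 1)) u := by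
  have h := congr($(Ring.inverse_mul_cancel _
    ((isPositive_adjoint_comp_self F).isUnit_add_smul_one hα)) u)
  simp only [mul_apply_eq_comp, add_apply, comp_apply, smul_apply, one_apply_eq_self, map_add,
    map_smul] at h
  simp only [map_sub, smul_apply]
  linear_combination (norm := module) h

end Tikhonov

theorem div_two_sqrt_mul_rpow_eq {c δ ν : ℝ} (hc : 0 < c) (hδ : 0 < δ) (hν : 0 ≤ ν) :
    δ / (2 * √(c * δ ^ (2 / (2 * ν + 1)))) = (2 * √c)⁻¹ * δ ^ (2 * ν / (2 * ν + 1)) := by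
  have hexp : √(δ ^ (2 / (2 * ν + 1))) * δ ^ (2 * ν / (2 * ν + 1)) = δ := by
    rw [Real.sqrt_eq_rpow, ← Real.rpow_mul hδ.le, ← Real.rpow_add hδ]
    conv_rhs => rw [← Real.rpow_one δ]
    congr 1
    field_simp
    ring
  rw [div_eq_iff (by positivity), Real.sqrt_mul hc.le]
  nth_rewrite 1 [← hexp]
  field_simp

/-- classical rates for quadratic Tikhonov regularisation,
with `u_α^δ = (F*F + α I)⁻¹ F* v^δ` and `α(δ) = c δ^(2/(2ν+1))`. -/
theorem classical_quadratic_rates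
    {U V : Type*} [NormedAddCommGroup U] [InnerProductSpace ℝ U] [CompleteSpace U]
    [NormedAddCommGroup V] [InnerProductSpace ℝ V] [CompleteSpace V]
    (F : U →L[ℝ] V) (ν : ℝ) (hν0 : 0 < ν) (hν1 : ν ≤ 1)
    (P : U →L[ℝ] U) (hP : IsFractionalPower ((adjoint F).comp F) ν P)
    (ω udag : U) (hsource : udag = P ω) (vdag : V) (hv : vdag = F udag)
    (c : ℝ) (hc : 0 < c) :
    ∃ C : ℝ, 0 < C ∧
      ∀ δ : ℝ, 0 < δ → ∀ vδ : V, ‖vdag - vδ‖ ≤ δ →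
        ‖(Ring.inverse ((adjoint F).comp F + (c * δ ^ (2 / (2 * ν + 1))) • (1 : U →L[ℝ] U)))
            (adjoint F vδ) - udag‖
          ≤ C * δ ^ (2 * ν / (2 * ν + 1)) := by
  subst hsource hv
  refine ⟨(2 * √c)⁻¹ + c ^ ν * ‖ω‖, by positivity, fun δ hδ vδ hvδ => ?_⟩
  set α := c * δ ^ (2 / (2 * ν + 1))
  have hα : 0 < α := by positivity
  have hpow : α ^ ν = c ^ ν * δ ^ (2 * ν / (2 * ν + 1)) := by
    rw [Real.mul_rpow hc.le (by positivity), ← Real.rpow_mul hδ.le]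
    congr 2
    ring
  have hnoise : ‖vδ - F (P ω)‖ ≤ δ := by rwa [norm_sub_rev]
  have hspec : ∀ x ∈ spectrum ℝ (adjoint F ∘L F), 0 ≤ x := fun _ hx =>
    (isPositive_adjoint_comp_self F).nonneg_of_mem_spectrum hx
  rw [ring_inverse_adjoint_comp_add_smul_apply_sub F hα (P ω) vδ, ← mul_apply_eq_comp]
  calc _ ≤ ‖vδ - F (P ω)‖ / (2 * √α) + α ^ ν * ‖ω‖ :=
        norm_sub_le_of_le (norm_ring_inverse_adjoint_comp_add_smul_apply_le F hα _)
          ((le_opNorm _ _).trans (mul_le_mul_of_nonneg_right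
            (hP.norm_smul_ring_inverse_mul_le hspec hν0.le hν1 hα) (norm_nonneg ω)))
    _ ≤ δ / (2 * √α) + α ^ ν * ‖ω‖ := by gcongr
    _ = ((2 * √c)⁻¹ + c ^ ν * ‖ω‖) * δ ^ (2 * ν / (2 * ν + 1)) := by
        rw [div_two_sqrt_mul_rpow_eq hc hδ hν0.le, hpow]
        ring
end
end
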